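/- arXiv:2312.10752 — 2 statements merged into one kernel-verified Lean document; each statement's English description precedes it below -/
import Mathlib

section
/- With A_i(s) defined from the b-deformed currents by the standard recursion, for all i, j ≥ 1 with μ = min(i,j), M = max(i,j), the antisymmetrized mixed commutator satisfies: [A_i(1), A_j(3)] − [A_j(1), A_i(3)] = Σ_{l≥1} D_{ij,l}(3)·A_l(1), where D_{ij,l}(3) = (i−j)(2·δ_{l≥M} + δ_{M≤l≤i+j−1})·J_{i+j−1−l} + sgn(i−j)(2l−3μ+1)·δ_{μ≤l≤M−1}·J_{i+j−1−l} + b(i−j)(i+j−2)·δ_{l,i+j−1}. -/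
open MvPolynomial

variable {K : Type*} [Field K]

/-- The `b`-deformed current `J_i` acting on `K[p_1, p_2, ...]` (with `X n = p_n` for `n ≥ 1`):
multiplication by `p_{-i}` for `i < 0`, `(1+b)·i·∂/∂p_i` for `i > 0`, and `0` for `i = 0`. -/
noncomputable def Jc (b : K) (i : ℤ) : MvPolynomial ℕ K → MvPolynomial ℕ K :=
  if 0 < i then fun P => ((1 + b) * (i : K)) • pderiv i.toNat P
  else if i < 0 then fun P => X (-i).toNat * P
  else 0

/-- `p_i^* = i·∂/∂p_i`, with the convention `p_n^* = 0` for `n ≤ 0`. -/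
noncomputable def pstar (i : ℤ) : MvPolynomial ℕ K → MvPolynomial ℕ K :=
  if 0 < i then fun P => (i : K) • pderiv i.toNat P else 0

/-- The operators `A_i(s)` : `A_i(0) = δ_{i,1}/(1+b)`,
`A_i(s+1) = Σ_{n ≥ 1} J_{i-n} A_n(s) + b(i-1) A_i(s)` (pointwise, locally finite sums). -/
noncomputable def Aop (b : K) : ℕ → ℕ → MvPolynomial ℕ K → MvPolynomial ℕ K
  | 0, i => fun P => if i = 1 then (1 + b)⁻¹ • P else 0
  | s + 1, i => fun P =>
      (∑ᶠ n : ℕ, if 1 ≤ n then Jc b ((i : ℤ) - n) (Aop b s n P) else 0)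
        + (b * ((i : K) - 1)) • Aop b s i P

/-- Commutator of operators (as functions). -/
noncomputable def commOp (f g : MvPolynomial ℕ K → MvPolynomial ℕ K) : MvPolynomial ℕ K → MvPolynomial ℕ K :=
  fun P => f (g P) - g (f P)

section AuxiliaryLemmas

lemma pderiv_comm (m n : ℕ) (P : MvPolynomial ℕ K) :
    pderiv m (pderiv n P) = pderiv n (pderiv m P) := by
  induction P using MvPolynomial.induction_on with
  | C a => simp
  | add p q hp hq => simp [hp, hq]
  | mul_X p k hp =>
      simp only [pderiv_mul, map_add, hp]
      rcases eq_or_ne k n with rfl | hn <;> rcases eq_or_ne k m with rfl | hm <;>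
        simp_all [pderiv_X_of_ne]

lemma Jc_pos {a : ℤ} (b : K) (h : 0 < a) :
    Jc b a = fun P => ((1 + b) * (a : K)) • pderiv a.toNat P := by
  simp [Jc, h]

lemma Jc_neg {a : ℤ} (b : K) (h : a < 0) :
    Jc b a = fun P => X (-a).toNat * P := by
  simp [Jc, h, not_lt_of_gt h, asymm h]

lemma Jc_zero'' (b : K) : Jc b 0 = 0 := by simp [Jc]

lemma Jc_map_zero (b : K) (a : ℤ) : Jc b a 0 = 0 := by
  unfold Jc; split_ifs <;> simp

lemma Jc_comm (b : K) (a c : ℤ) (P : MvPolynomial ℕ K) :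
    Jc b a (Jc b c P)
      = Jc b c (Jc b a P) + (if a + c = 0 then ((1 + b) * (a : K)) • P else 0) := by
  rcases lt_trichotomy a 0 with ha | rfl | ha
  · rcases lt_trichotomy c 0 with hc | rfl | hc
    · rw [Jc_neg b ha, Jc_neg b hc, if_neg (by omega)]
      simp [mul_left_comm]
    · simp [Jc_zero'', Jc_map_zero, Jc_neg b ha, if_neg (show ¬ a = 0 by omega)]
    · rw [Jc_neg b ha, Jc_pos b hc]
      by_cases h : a + c = 0
      · have hk : (-a).toNat = c.toNat := by omega
        rw [if_pos h]
        simp only [hk, mul_smul_comm, pderiv_mul, pderiv_X_self, one_mul]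
        have hac : (a : K) = -(c : K) := by
          have : a = -c := by omega
          simp [this]
        rw [smul_add, hac]
        ring_nf
        module
      · have hk : c.toNat ≠ (-a).toNat := by omega
        rw [if_neg h]
        simp [mul_smul_comm, pderiv_mul, pderiv_X_of_ne (by omega : (-a).toNat ≠ c.toNat)]
  · simp [Jc_zero'', Jc_map_zero]
  · rcases lt_trichotomy c 0 with hc | rfl | hc
    · rw [Jc_neg b hc, Jc_pos b ha]
      by_cases h : a + c = 0
      · have hk : (-c).toNat = a.toNat := by omega
        rw [if_pos h]
        simp only [hk, pderiv_mul, pderiv_X_self, one_mul, smul_add, mul_smul_comm]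
        module
      · rw [if_neg h]
        simp [pderiv_mul, mul_smul_comm,
          Pi.single_eq_of_ne (show (-c).toNat ≠ a.toNat by omega)]
    · simp [Jc_zero'', Jc_map_zero, Jc_pos b ha, if_neg (show ¬ a = 0 by omega)]
    · rw [Jc_pos b ha, Jc_pos b hc, if_neg (by omega)]
      simp [smul_comm ((1+b)*(c:K)), pderiv_comm]
def vb (N : ℕ) (P : MvPolynomial ℕ K) : Prop := ∀ k, N ≤ k → pderiv k P = 0

lemma vb_exists (P : MvPolynomial ℕ K) : ∃ N, 1 ≤ N ∧ vb N P := by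
  refine ⟨P.vars.sup id + 1, le_add_self, fun k hk => ?_⟩
  apply pderiv_eq_zero_of_notMem_vars
  intro hmem
  have := Finset.le_sup (f := id) hmem
  simp only [id] at this
  omega

lemma vb_mono {N M : ℕ} {P : MvPolynomial ℕ K} (h : vb N P) (hNM : N ≤ M) : vb M P :=
  fun k hk => h k (le_trans hNM hk)

lemma vb_zero (N : ℕ) : vb N (0 : MvPolynomial ℕ K) := fun k _ => by simp

lemma vb_smul {N : ℕ} {P : MvPolynomial ℕ K} (c : K) (h : vb N P) : vb N (c • P) :=
  fun k hk => by rw [Derivation.map_smul, h k hk, smul_zero]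

lemma vb_add {N : ℕ} {P Q : MvPolynomial ℕ K} (hP : vb N P) (hQ : vb N Q) : vb N (P + Q) :=
  fun k hk => by rw [map_add, hP k hk, hQ k hk, add_zero]

lemma vb_pderiv {N : ℕ} {P : MvPolynomial ℕ K} (m : ℕ) (h : vb N P) : vb N (pderiv m P) :=
  fun k hk => by rw [pderiv_comm, h k hk, map_zero]

lemma vb_Jc {N : ℕ} {P : MvPolynomial ℕ K} (b : K) {a : ℤ} (ha : (-a).toNat < N)
    (h : vb N P) : vb N (Jc b a P) := by
  rcases lt_trichotomy a 0 with h0 | rfl | h0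
  · rw [Jc_neg b h0]
    intro k hk
    rw [pderiv_mul, h k hk, pderiv_X_of_ne (by omega), zero_mul, mul_zero, add_zero]
  · rw [Jc_zero'']; exact vb_zero N
  · rw [Jc_pos b h0]; exact vb_smul _ (vb_pderiv _ h)

lemma Jc_eq_zero_of_vb {N : ℕ} {P : MvPolynomial ℕ K} (b : K) {a : ℤ} (ha : (N : ℤ) ≤ a)
    (hN : 1 ≤ N) (h : vb N P) : Jc b a P = 0 := by
  rw [Jc_pos b (by omega)]
  have : pderiv a.toNat P = 0 := h a.toNat (by omega)
  simp [this]
lemma Jc_add (b : K) (a : ℤ) (P Q : MvPolynomial ℕ K) :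
    Jc b a (P + Q) = Jc b a P + Jc b a Q := by
  unfold Jc; split_ifs <;> simp [mul_add, smul_add]

lemma Jc_smul (b : K) (a : ℤ) (c : K) (P : MvPolynomial ℕ K) :
    Jc b a (c • P) = c • Jc b a P := by
  unfold Jc; split_ifs <;> simp [smul_comm c, mul_smul_comm]

lemma Jc_sub (b : K) (a : ℤ) (P Q : MvPolynomial ℕ K) :
    Jc b a (P - Q) = Jc b a P - Jc b a Q := by
  unfold Jc; split_ifs <;> simp [mul_sub, smul_sub]

noncomputable def JcHom (b : K) (a : ℤ) : MvPolynomial ℕ K →+ MvPolynomial ℕ K :=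
  AddMonoidHom.mk' (Jc b a) (Jc_add b a)

lemma Jc_sum (b : K) (a : ℤ) {ι : Type*} (s : Finset ι) (f : ι → MvPolynomial ℕ K) :
    Jc b a (∑ x ∈ s, f x) = ∑ x ∈ s, Jc b a (f x) :=
  map_sum (JcHom b a) f s

lemma Aop_smul (b : K) (s n : ℕ) (c : K) (Q : MvPolynomial ℕ K) :
    Aop b s n (c • Q) = c • Aop b s n Q := by
  induction s generalizing n with
  | zero =>
      show (if n = 1 then (1+b)⁻¹ • (c • Q) else 0) = c • (if n = 1 then (1+b)⁻¹ • Q else 0)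
      split_ifs <;> simp [smul_comm c]
  | succ s ih =>
      show (∑ᶠ m : ℕ, if 1 ≤ m then Jc b ((n : ℤ) - m) (Aop b s m (c • Q)) else 0)
          + (b * ((n : K) - 1)) • Aop b s n (c • Q)
        = c • ((∑ᶠ m : ℕ, if 1 ≤ m then Jc b ((n : ℤ) - m) (Aop b s m Q) else 0)
          + (b * ((n : K) - 1)) • Aop b s n Q)
      rw [smul_add, smul_finsum]
      congr 1
      · refine finsum_congr fun m => ?_
        split_ifs <;> simp [ih, Jc_smul]
      · rw [ih, smul_comm]

lemma A1_eq (b : K) (i : ℕ) (P : MvPolynomial ℕ K) :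
    Aop b 1 i P = (1 + b)⁻¹ • Jc b ((i : ℤ) - 1) P := by
  show (∑ᶠ n : ℕ, if 1 ≤ n then Jc b ((i : ℤ) - n) (Aop b 0 n P) else 0)
      + (b * ((i : K) - 1)) • Aop b 0 i P = _
  have h1 : ∀ n : ℕ, (fun n : ℕ => if 1 ≤ n then Jc b ((i : ℤ) - n) (Aop b 0 n P) else 0) n
      = (fun n : ℕ => if n = 1 then (1 + b)⁻¹ • Jc b ((i : ℤ) - 1) P else 0) n := by
    intro n
    show (if 1 ≤ n then Jc b ((i : ℤ) - n) (if n = 1 then (1+b)⁻¹ • P else 0) else 0) = _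
    rcases eq_or_ne n 1 with rfl | hn
    · simp [Jc_smul]
    · rcases Nat.eq_zero_or_pos n with rfl | hn1
      · simp
      · simp only [if_pos hn1, if_neg hn, Jc_map_zero, ite_self]
  rw [finsum_congr h1, finsum_eq_single _ 1 (fun x hx => by simp [hx])]
  simp only [if_pos rfl, if_true, eq_self_iff_true]
  have h2 : (b * ((i : K) - 1)) • Aop b 0 i P = 0 := by
    show (b * ((i : K) - 1)) • (if i = 1 then (1+b)⁻¹ • P else 0) = 0
    rcases eq_or_ne i 1 with rfl | hi
    · simp
    · simp [hi]
  rw [h2, add_zero]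

lemma A2_eq (b : K) (i : ℕ) (P : MvPolynomial ℕ K) :
    Aop b 2 i P = (1 + b)⁻¹ •
      ((∑ᶠ n : ℕ, if 1 ≤ n then Jc b ((i : ℤ) - n) (Jc b ((n : ℤ) - 1) P) else 0)
        + (b * ((i : K) - 1)) • Jc b ((i : ℤ) - 1) P) := by
  show (∑ᶠ n : ℕ, if 1 ≤ n then Jc b ((i : ℤ) - n) (Aop b 1 n P) else 0)
      + (b * ((i : K) - 1)) • Aop b 1 i P = _
  rw [smul_add, smul_finsum]
  congr 1
  · refine finsum_congr fun n => ?_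
    rw [A1_eq]
    split_ifs <;> simp [Jc_smul]
  · rw [A1_eq, smul_comm]
lemma A2_sum (b : K) (i : ℕ) (P : MvPolynomial ℕ K) {N : ℕ} (hN : 1 ≤ N) (h : vb N P)
    {M : ℕ} (hM : N + 1 ≤ M) :
    Aop b 2 i P = (1 + b)⁻¹ •
      ((∑ n ∈ Finset.range M, if 1 ≤ n then Jc b ((i : ℤ) - n) (Jc b ((n : ℤ) - 1) P) else 0)
        + (b * ((i : K) - 1)) • Jc b ((i : ℤ) - 1) P) := by
  rw [A2_eq]
  congr 2
  apply finsum_eq_sum_of_support_subset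
  intro n hn
  simp only [Function.mem_support] at hn
  simp only [Finset.coe_range, Set.mem_Iio]
  by_contra hc
  push_neg at hc
  apply hn
  rw [if_pos (by omega), Jc_eq_zero_of_vb b (by omega) hN h, Jc_map_zero]

lemma A2_zero (b : K) (i : ℕ) (P : MvPolynomial ℕ K) {N : ℕ} (hN : 1 ≤ N) (h : vb N P)
    (hi : 2 * N + 2 ≤ i) : Aop b 2 i P = 0 := by
  rw [A2_sum b i P hN h (le_refl (N + 1))]
  have h1 : (∑ n ∈ Finset.range (N + 1),
      if 1 ≤ n then Jc b ((i : ℤ) - n) (Jc b ((n : ℤ) - 1) P) else 0) = 0 := by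
    apply Finset.sum_eq_zero
    intro n hn
    simp only [Finset.mem_range] at hn
    split_ifs with h1
    · exact Jc_eq_zero_of_vb b (by omega) hN (vb_Jc b (by omega) h)
    · rfl
  rw [h1, Jc_eq_zero_of_vb b (by omega) hN h]
  simp

lemma A3_sum (b : K) (j : ℕ) (P : MvPolynomial ℕ K) {N : ℕ} (hN : 1 ≤ N) (h : vb N P)
    {M : ℕ} (hM : 2 * N + 2 ≤ M) :
    Aop b 3 j P = (∑ m ∈ Finset.range M, if 1 ≤ m then Jc b ((j : ℤ) - m) (Aop b 2 m P) else 0)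
        + (b * ((j : K) - 1)) • Aop b 2 j P := by
  show (∑ᶠ m : ℕ, if 1 ≤ m then Jc b ((j : ℤ) - m) (Aop b 2 m P) else 0)
      + (b * ((j : K) - 1)) • Aop b 2 j P = _
  congr 1
  apply finsum_eq_sum_of_support_subset
  intro m hm
  simp only [Function.mem_support] at hm
  simp only [Finset.coe_range, Set.mem_Iio]
  by_contra hc
  push_neg at hc
  apply hm
  rw [if_pos (by omega), A2_zero b m P hN h (by omega), Jc_map_zero]
lemma keycomm2 (b : K) (hb : 1 + b ≠ 0) (i m : ℕ) (hi : 1 ≤ i) (hm : 1 ≤ m)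
    (P : MvPolynomial ℕ K) :
    Jc b ((i : ℤ) - 1) (Aop b 2 m P) - Aop b 2 m (Jc b ((i : ℤ) - 1) P)
      = ((i : K) - 1) • Jc b ((m : ℤ) + i - 2) P := by
  obtain ⟨N, hN, h⟩ := vb_exists P
  have hQ : vb N (Jc b ((i : ℤ) - 1) P) := vb_Jc b (by omega) h
  set M := N + m + i + 2 with hMdef
  have hM : N + 1 ≤ M := by omega
  rw [A2_sum b m P hN h hM, A2_sum b m _ hN hQ hM]
  rw [Jc_smul, Jc_add, Jc_sum, Jc_smul, ← smul_sub, add_sub_add_comm, ← Finset.sum_sub_distrib,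
      ← smul_sub]
  have hmain : (∑ n ∈ Finset.range M,
        ((if 1 ≤ n then Jc b ((i:ℤ)-1) (Jc b ((m : ℤ) - n) (Jc b ((n : ℤ) - 1) P)) else Jc b ((i:ℤ)-1) 0)
          - (if 1 ≤ n then Jc b ((m : ℤ) - n) (Jc b ((n : ℤ) - 1) (Jc b ((i : ℤ) - 1) P)) else 0)))
      = ((1 + b) * ((i : K) - 1)) • Jc b ((m : ℤ) + i - 2) P := by
    have hterm : ∀ n ∈ Finset.range M,
        ((if 1 ≤ n then Jc b ((i:ℤ)-1) (Jc b ((m : ℤ) - n) (Jc b ((n : ℤ) - 1) P)) else Jc b ((i:ℤ)-1) 0)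
          - (if 1 ≤ n then Jc b ((m : ℤ) - n) (Jc b ((n : ℤ) - 1) (Jc b ((i : ℤ) - 1) P)) else 0))
        = (if n = m + i - 1 then ((1 + b) * (((i:ℤ) - 1 : ℤ) : K)) • Jc b ((n : ℤ) - 1) P else 0) := by
      intro n hn
      rcases Nat.eq_zero_or_pos n with rfl | hn1
      · rw [if_neg (by omega), if_neg (by omega), if_neg (by omega), Jc_map_zero, sub_zero]
      · have hn1' : 1 ≤ n := hn1
        rw [if_pos hn1', if_pos hn1']
        rw [Jc_comm b ((i:ℤ)-1) ((m:ℤ)-n) (Jc b ((n : ℤ) - 1) P)]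
        rw [Jc_comm b ((i:ℤ)-1) ((n:ℤ)-1) P]
        rw [Jc_add]
        have hz : Jc b ((m:ℤ)-n) (if (i:ℤ)-1 + ((n:ℤ)-1) = 0 then ((1 + b) * (((i:ℤ)-1 : ℤ) : K)) • P else 0) = 0 := by
          split_ifs with hcond
          · have hi1 : i = 1 := by omega
            subst hi1
            norm_num
            exact Jc_map_zero b _
          · exact Jc_map_zero b _
        rw [hz, add_zero, add_sub_cancel_left]
        split_ifs with h1 h2 h2
        · exact rfl
        · exfalso; omega
        · exfalso; omega
        · rfl
    rw [Finset.sum_congr rfl hterm, Finset.sum_ite_eq' (Finset.range M) (m + i - 1)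
      (fun n => ((1 + b) * (((i:ℤ) - 1 : ℤ) : K)) • Jc b ((n : ℤ) - 1) P)]
    rw [if_pos (by simp only [Finset.mem_range]; omega)]
    have hcast : (((m + i - 1 : ℕ) : ℤ) - 1) = (m : ℤ) + i - 2 := by omega
    rw [hcast]
    norm_num
  simp only [apply_ite (Jc b ((i:ℤ)-1))]
  rw [hmain]
  have hsnd : Jc b ((i:ℤ)-1) (Jc b ((m:ℤ)-1) P) - Jc b ((m:ℤ)-1) (Jc b ((i:ℤ)-1) P) = 0 := by
    rw [Jc_comm b ((i:ℤ)-1) ((m:ℤ)-1) P, add_sub_cancel_left]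
    split_ifs with hcond
    · have hi1 : i = 1 := by omega
      subst hi1; norm_num
    · rfl
  rw [hsnd, smul_zero, add_zero, smul_smul]
  push_cast
  rw [← mul_assoc, inv_mul_cancel₀ hb, one_mul]
lemma commA1A3 (b : K) (hb : 1 + b ≠ 0) (i j : ℕ) (hi : 1 ≤ i) (hj : 1 ≤ j)
    (P : MvPolynomial ℕ K) {N : ℕ} (hN : 1 ≤ N) (h : vb N P)
    {M : ℕ} (hM : 2 * N + i + j + 3 ≤ M) :
    commOp (Aop b 1 i) (Aop b 3 j) P
      = (1 + b)⁻¹ • ( ((i : K) - 1) •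
          ((∑ n ∈ Finset.range M, if 1 ≤ n then Jc b ((i:ℤ)+j-1-n) (Jc b ((n:ℤ)-1) P) else 0)
           + (∑ m ∈ Finset.range M, if 1 ≤ m then Jc b ((j:ℤ)-m) (Jc b ((m:ℤ)+i-2) P) else 0))
        + (b * ((i:K)-1) * ((i:K)+2*(j:K)-3)) • Jc b ((i:ℤ)+j-2) P ) := by
  have hQ : vb N (Jc b ((i : ℤ) - 1) P) := vb_Jc b (by omega) h
  have hM' : 2 * N + 2 ≤ M := by omega
  show Aop b 1 i (Aop b 3 j P) - Aop b 3 j (Aop b 1 i P) = _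
  rw [A1_eq b i P, Aop_smul b 3 j, A1_eq b i (Aop b 3 j P), ← smul_sub]
  congr 1
  rw [A3_sum b j P hN h hM', A3_sum b j (Jc b ((i : ℤ) - 1) P) hN hQ hM']
  rw [Jc_add, Jc_sum, Jc_smul, add_sub_add_comm, ← Finset.sum_sub_distrib, ← smul_sub]
  -- second piece
  rw [keycomm2 b hb i j hi hj P]
  -- per-term rewrite of the sum
  have hterm : ∀ m ∈ Finset.range M,
      (Jc b ((i:ℤ)-1) (if 1 ≤ m then Jc b ((j : ℤ) - m) (Aop b 2 m P) else 0)
        - (if 1 ≤ m then Jc b ((j : ℤ) - m) (Aop b 2 m (Jc b ((i : ℤ) - 1) P)) else 0))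
      = (if 1 ≤ m then ((i:K)-1) • Jc b ((j:ℤ)-m) (Jc b ((m:ℤ)+i-2) P) else 0)
        + (if m = i + j - 1 then ((1 + b) * (((i:ℤ)-1 : ℤ) : K)) • Aop b 2 m P else 0) := by
    intro m hmem
    rcases Nat.eq_zero_or_pos m with rfl | hm1
    · rw [if_neg (by omega), if_neg (by omega), if_neg (by omega), if_neg (by omega),
        Jc_map_zero, sub_zero, add_zero]
    · have hm1' : 1 ≤ m := hm1
      rw [if_pos hm1', if_pos hm1', if_pos hm1']
      rw [Jc_comm b ((i:ℤ)-1) ((j:ℤ)-m) (Aop b 2 m P)]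
      rw [add_sub_right_comm, ← Jc_sub, keycomm2 b hb i m hi hm1' P, Jc_smul]
      congr 1
      split_ifs with h1 h2 h2
      · rfl
      · exfalso; omega
      · exfalso; omega
      · rfl
  rw [Finset.sum_congr rfl hterm, Finset.sum_add_distrib]
  rw [Finset.sum_ite_eq' (Finset.range M) (i + j - 1)
      (fun m => ((1 + b) * (((i:ℤ)-1 : ℤ) : K)) • Aop b 2 m P),
    if_pos (by simp only [Finset.mem_range]; omega)]
  rw [A2_sum b (i + j - 1) P hN h (show N + 1 ≤ M by omega)]
  have hsmul : ∀ (X : MvPolynomial ℕ K),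
      ((1 + b) * (((i:ℤ)-1 : ℤ) : K)) • (1 + b)⁻¹ • X = ((i:K)-1) • X := by
    intro X
    rw [smul_smul]
    push_cast
    rw [mul_comm (1+b), mul_assoc, mul_inv_cancel₀ hb, mul_one]
  rw [hsmul]
  -- pull scalar out of first sum
  have hpull : (∑ m ∈ Finset.range M,
      if 1 ≤ m then ((i:K)-1) • Jc b ((j:ℤ)-m) (Jc b ((m:ℤ)+i-2) P) else 0)
      = ((i:K)-1) • ∑ m ∈ Finset.range M,
          (if 1 ≤ m then Jc b ((j:ℤ)-m) (Jc b ((m:ℤ)+i-2) P) else 0) := by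
    rw [Finset.smul_sum]
    refine Finset.sum_congr rfl fun m _ => ?_
    split_ifs <;> simp
  rw [hpull]
  -- normalize casts in the A2 part
  have hc1 : ∀ n : ℕ, (((i + j - 1 : ℕ) : ℤ) - (n:ℤ)) = (i:ℤ)+j-1-n := by intro n; omega
  have hc2 : (((i + j - 1 : ℕ) : ℤ) - 1) = (i:ℤ)+j-2 := by omega
  have hc3 : (((i + j - 1 : ℕ) : K) - 1) = (i:K)+(j:K)-2 := by
    have hn : (i + j - 1 : ℕ) + 1 = i + j := by omega
    have h5 : ((i + j - 1 : ℕ) : K) + 1 = (i:K) + (j:K) := by exact_mod_cast congrArg (Nat.cast : ℕ → K) hn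
    linear_combination h5
  simp only [hc1, hc2, hc3]
  have hc4 : Jc b ((j:ℤ)+i-2) P = Jc b ((i:ℤ)+j-2) P := by
    congr 1; ring
  rw [hc4]
  rw [smul_add]
  module
noncomputable def ddc (K : Type*) [Field K] (i j l : ℕ) : K :=
  (((i:K)-1) * ((if 1 ≤ l then (1:K) else 0) + (if i ≤ l then (1:K) else 0))
    - ((j:K)-1) * ((if 1 ≤ l then (1:K) else 0) + (if j ≤ l then (1:K) else 0)))
  - (if 1 ≤ l then (1:K) else 0) *
      ( ((i:K)-(j:K)) * (2 * (if max i j ≤ l then (1:K) else 0)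
          + (if max i j ≤ l ∧ l ≤ i + j - 1 then (1:K) else 0))
        + (((i:ℤ) - (j:ℤ)).sign : K) * (2 * (l:K) - 3 * ((min i j : ℕ) : K) + 1)
            * (if min i j ≤ l ∧ l ≤ max i j - 1 then (1:K) else 0) )

set_option maxHeartbeats 2000000 in
lemma ddA (i j l l' : ℕ) (hi : 1 ≤ i) (hj : 1 ≤ j) (hl : 1 ≤ l) (hl' : 1 ≤ l')
    (hs : l + l' = i + j) : ddc K i j l + ddc K i j l' = 0 := by
  have hsK : (l:K) + (l':K) = (i:K) + (j:K) := by exact_mod_cast congrArg (Nat.cast : ℕ → K) hs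
  have hlK : (l':K) = (i:K) + (j:K) - (l:K) := by linear_combination hsK
  unfold ddc
  rw [if_pos hl, if_pos hl']
  rcases lt_trichotomy i j with hij | hij | hij
  · rw [max_eq_right hij.le, min_eq_left hij.le,
      Int.sign_eq_neg_one_iff_neg.mpr (by omega : (i:ℤ) - (j:ℤ) < 0)]
    push_cast
    rw [hlK]
    split_ifs <;>
      first
        | (exfalso; omega)
        | ring1
        | (rcases (by omega : l = i ∨ l = j) with h9 | h9 <;> rw [h9] <;> first | (exfalso; omega) | ring1)
  · subst hij
    simp only [max_self, min_self, sub_self, Int.sign_zero, Int.cast_zero]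
    push_cast
    rw [hlK]
    split_ifs <;>
      first
        | (exfalso; omega)
        | ring1
        | (rcases (by omega : l = i ∨ l = j) with h9 | h9 <;> rw [h9] <;> first | (exfalso; omega) | ring1)
  · rw [max_eq_left hij.le, min_eq_right hij.le,
      Int.sign_eq_one_iff_pos.mpr (by omega : (0:ℤ) < (i:ℤ) - (j:ℤ))]
    push_cast
    rw [hlK]
    split_ifs <;>
      first
        | (exfalso; omega)
        | ring1
        | (rcases (by omega : l = i ∨ l = j) with h9 | h9 <;> rw [h9] <;> first | (exfalso; omega) | ring1)

set_option maxHeartbeats 1000000 in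
lemma ddB (i j l : ℕ) (hi : 1 ≤ i) (hj : 1 ≤ j) (h2 : l + l = i + j) :
    ddc K i j l = 0 := by
  have h2K : (l:K) + (l:K) = (i:K) + (j:K) := by exact_mod_cast congrArg (Nat.cast : ℕ → K) h2
  unfold ddc
  rcases lt_trichotomy i j with hij | hij | hij
  · rw [max_eq_right hij.le, min_eq_left hij.le,
      Int.sign_eq_neg_one_iff_neg.mpr (by omega : (i:ℤ) - (j:ℤ) < 0)]
    push_cast
    split_ifs <;>
      first
        | (exfalso; omega)
        | ring1
        | linear_combination h2K
        | linear_combination -h2K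
  · subst hij
    simp only [max_self, min_self, sub_self, Int.sign_zero, Int.cast_zero]
    split_ifs <;>
      first
        | (exfalso; omega)
        | ring1
        | linear_combination h2K
        | linear_combination -h2K
  · rw [max_eq_left hij.le, min_eq_right hij.le,
      Int.sign_eq_one_iff_pos.mpr (by omega : (0:ℤ) < (i:ℤ) - (j:ℤ))]
    push_cast
    split_ifs <;>
      first
        | (exfalso; omega)
        | ring1
        | linear_combination h2K
        | linear_combination -h2K

set_option maxHeartbeats 1000000 in
lemma ddE (i j l : ℕ) (hi : 1 ≤ i) (hj : 1 ≤ j) (h : l = 0 ∨ i + j ≤ l) :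
    ddc K i j l = 0 := by
  unfold ddc
  split_ifs <;> first | (exfalso; omega) | ring1
lemma Tsymm (b : K) (i j l l' : ℕ) (hs : l + l' = i + j) (hne : i + j ≠ 2)
    (P : MvPolynomial ℕ K) :
    Jc b ((i:ℤ)+(j:ℤ)-1-(l':ℤ)) (Jc b ((l':ℤ)-1) P)
      = Jc b ((i:ℤ)+(j:ℤ)-1-(l:ℤ)) (Jc b ((l:ℤ)-1) P) := by
  have h1 : (i:ℤ)+(j:ℤ)-1-(l':ℤ) = (l:ℤ)-1 := by omega
  have h2 : (l':ℤ)-1 = (i:ℤ)+(j:ℤ)-1-(l:ℤ) := by omega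
  rw [h1, h2, Jc_comm b ((l:ℤ)-1) ((i:ℤ)+(j:ℤ)-1-(l:ℤ)) P, if_neg (by omega), add_zero]

lemma inv_sum (b : K) (i j : ℕ) (hi : 1 ≤ i) (hj : 1 ≤ j) (P : MvPolynomial ℕ K)
    {M : ℕ} (hM : i + j ≤ M) :
    ∑ l ∈ Finset.range M, ddc K i j l • (Jc b ((i:ℤ)+(j:ℤ)-1-(l:ℤ)) (Jc b ((l:ℤ)-1) P)) = 0 := by
  rw [← Finset.sum_subset (show Finset.Ico 1 (i+j) ⊆ Finset.range M by
      intro x hx; simp only [Finset.mem_Ico] at hx; simp only [Finset.mem_range]; omega)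
      (fun x hx1 hx2 => by
        have : x = 0 ∨ i + j ≤ x := by
          simp only [Finset.mem_Ico] at hx2; omega
        rw [ddE i j x hi hj this, zero_smul])]
  apply Finset.sum_involution (fun l _ => i + j - l)
  · intro l hl
    simp only [Finset.mem_Ico] at hl
    rcases eq_or_ne (l + l) (i + j) with h2 | h2
    · rw [show i + j - l = l by omega, ddB i j l hi hj h2, zero_smul, add_zero]
    · rw [Tsymm b i j l (i+j-l) (by omega) (by omega) P, ← add_smul,
        ddA i j l (i+j-l) hi hj (by omega) (by omega) (by omega), zero_smul]
  · intro l hl hflne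
    simp only [Finset.mem_Ico] at hl
    intro hgl
    apply hflne
    rw [ddB i j l hi hj (by omega), zero_smul]
  · intro l hl
    simp only [Finset.mem_Ico] at hl ⊢
    omega
  · intro l hl
    simp only [Finset.mem_Ico] at hl
    omega
set_option maxHeartbeats 1000000 in
lemma pointwise (b : K) (i j l : ℕ) (hi : 1 ≤ i) (hj : 1 ≤ j) (T U : MvPolynomial ℕ K) :
    ((((i:K)-1) • (if 1 ≤ l then T else 0) + ((i:K)-1) • (if i ≤ l then T else 0))
      - (((j:K)-1) • (if 1 ≤ l then T else 0) + ((j:K)-1) • (if j ≤ l then T else 0))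
      + (if l = i + j - 1 then (b * ((i:K)-(j:K)) * ((i:K)+(j:K)-2)) • U else 0))
    - ((if 1 ≤ l then
        (((i : K) - (j:K)) * (2 * (if max i j ≤ l then (1:K) else 0)
            + (if max i j ≤ l ∧ l ≤ i + j - 1 then (1:K) else 0))) • T
        + ((((i : ℤ) - (j:ℤ)).sign : K) * (2 * (l:K) - 3 * ((min i j : ℕ) : K) + 1)
            * (if min i j ≤ l ∧ l ≤ max i j - 1 then (1:K) else 0)) • T
        + (b * ((i : K) - (j:K)) * ((i : K) + (j:K) - 2) * (if l = i + j - 1 then (1:K) else 0)) • U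
      else 0))
    = ddc K i j l • T := by
  unfold ddc
  split_ifs <;> first | (exfalso; omega) | module
lemma tau_reindex (b : K) (i j : ℕ) (hi : 1 ≤ i) (P : MvPolynomial ℕ K) {N : ℕ}
    (hN : 1 ≤ N) (h : vb N P) {M : ℕ} (hM : N + i + 3 ≤ M) :
    (∑ m ∈ Finset.range M, if 1 ≤ m then Jc b ((j:ℤ)-m) (Jc b ((m:ℤ)+i-2) P) else 0)
      = ∑ l ∈ Finset.range M,
          (if i ≤ l then Jc b ((i:ℤ)+(j:ℤ)-1-l) (Jc b ((l:ℤ)-1) P) else 0) := by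
  have hzero : ∀ x ∈ Finset.range M, x ∉ Finset.Ico (i-1) M →
      (if i ≤ x then Jc b ((i:ℤ)+(j:ℤ)-1-x) (Jc b ((x:ℤ)-1) P) else 0) = 0 := by
    intro x hx1 hx2
    simp only [Finset.mem_range] at hx1
    simp only [Finset.mem_Ico] at hx2
    rw [if_neg (by omega)]
  rw [← Finset.sum_subset (show Finset.Ico (i-1) M ⊆ Finset.range M by
      intro x hx; simp only [Finset.mem_Ico] at hx; simp only [Finset.mem_range]; omega) hzero]
  rw [Finset.sum_Ico_eq_sum_range]
  have hcgr : ∀ k ∈ Finset.range (M - (i-1)),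
      (if i ≤ i - 1 + k then Jc b ((i:ℤ)+(j:ℤ)-1-((i-1+k : ℕ):ℤ)) (Jc b (((i-1+k : ℕ):ℤ)-1) P) else 0)
        = (if 1 ≤ k then Jc b ((j:ℤ)-k) (Jc b ((k:ℤ)+i-2) P) else 0) := by
    intro k _
    rcases Nat.eq_zero_or_pos k with rfl | hk
    · rw [if_neg (by omega), if_neg (by omega)]
    · rw [if_pos (by omega), if_pos (by omega : 1 ≤ k),
        (by omega : (i:ℤ)+(j:ℤ)-1-((i-1+k : ℕ):ℤ) = (j:ℤ)-k),
        (by omega : ((i-1+k : ℕ):ℤ)-1 = (k:ℤ)+i-2)]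
  rw [Finset.sum_congr rfl hcgr]
  symm
  apply Finset.sum_subset (show Finset.range (M - (i-1)) ⊆ Finset.range M by
    intro x hx; simp only [Finset.mem_range] at *; omega)
  intro x hx1 hx2
  simp only [Finset.mem_range] at hx1 hx2
  rw [Jc_eq_zero_of_vb b (by omega : (N:ℤ) ≤ (x:ℤ)+i-2) hN h, Jc_map_zero, ite_self]

lemma Aop_bneg (b : K) (hb : 1 + b = 0) (s n : ℕ) (P : MvPolynomial ℕ K) :
    Aop b s n P = 0 := by
  induction s generalizing n P with
  | zero =>
      show (if n = 1 then (1+b)⁻¹ • P else 0) = 0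
      split_ifs <;> simp [hb]
  | succ s ih =>
      show (∑ᶠ m : ℕ, if 1 ≤ m then Jc b ((n : ℤ) - m) (Aop b s m P) else 0)
          + (b * ((n : K) - 1)) • Aop b s n P = 0
      have : ∀ m : ℕ, (if 1 ≤ m then Jc b ((n : ℤ) - m) (Aop b s m P) else 0) = 0 := by
        intro m; split_ifs <;> simp [ih, Jc_map_zero]
      rw [finsum_congr this, finsum_zero, ih, smul_zero, add_zero]

end AuxiliaryLemmas

/-- `[A_i(1), A_j(3)] − [A_j(1), A_i(3)] = Σ_{l≥1} D_{ij,l}(3)·A_l(1)` where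
`D_{ij,l}(3) = (i−j)(2δ_{l≥M} + δ_{M≤l≤i+j−1})·J_{i+j−1−l}
  + sgn(i−j)(2l−3μ+1)·δ_{μ≤l≤M−1}·J_{i+j−1−l} + b(i−j)(i+j−2)·δ_{l,i+j−1}`,
with `μ = min(i,j)`, `M = max(i,j)`. -/
theorem commutator_A1_A3 (b : K) (i j : ℕ) (hi : 1 ≤ i) (hj : 1 ≤ j) :
    commOp (Aop b 1 i) (Aop b 3 j) - commOp (Aop b 1 j) (Aop b 3 i)
      = fun P => ∑ᶠ l : ℕ, if 1 ≤ l then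
          (((i : K) - j) * (2 * (if max i j ≤ l then (1 : K) else 0)
                + (if max i j ≤ l ∧ l ≤ i + j - 1 then (1 : K) else 0)))
              • Jc b ((i : ℤ) + j - 1 - l) (Aop b 1 l P)
            + ((((i : ℤ) - j).sign : K) * (2 * (l : K) - 3 * ((min i j : ℕ) : K) + 1)
                * (if min i j ≤ l ∧ l ≤ max i j - 1 then (1 : K) else 0))
              • Jc b ((i : ℤ) + j - 1 - l) (Aop b 1 l P)
            + (b * ((i : K) - j) * ((i : K) + j - 2) * (if l = i + j - 1 then (1 : K) else 0))
              • Aop b 1 l P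
        else 0 := by
  rcases eq_or_ne (1 + b) 0 with hb | hb
  · funext P
    simp only [Pi.sub_apply, commOp, Aop_bneg b hb]
    simp [Jc_map_zero]
  · funext P
    obtain ⟨N, hN, h⟩ := vb_exists P
    set M := 2 * N + i + j + 5 with hMdef
    -- RHS as a finite sum
    have hsummand : ∀ l : ℕ, (if 1 ≤ l then
          (((i : K) - j) * (2 * (if max i j ≤ l then (1 : K) else 0)
                + (if max i j ≤ l ∧ l ≤ i + j - 1 then (1 : K) else 0)))
              • Jc b ((i : ℤ) + j - 1 - l) (Aop b 1 l P)
            + ((((i : ℤ) - j).sign : K) * (2 * (l : K) - 3 * ((min i j : ℕ) : K) + 1)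
                * (if min i j ≤ l ∧ l ≤ max i j - 1 then (1 : K) else 0))
              • Jc b ((i : ℤ) + j - 1 - l) (Aop b 1 l P)
            + (b * ((i : K) - j) * ((i : K) + j - 2) * (if l = i + j - 1 then (1 : K) else 0))
              • Aop b 1 l P
        else 0)
        = (1 + b)⁻¹ • (if 1 ≤ l then
          (((i : K) - (j:K)) * (2 * (if max i j ≤ l then (1 : K) else 0)
                + (if max i j ≤ l ∧ l ≤ i + j - 1 then (1 : K) else 0)))
              • Jc b ((i:ℤ)+(j:ℤ)-1-(l:ℤ)) (Jc b ((l:ℤ)-1) P)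
            + ((((i : ℤ) - (j:ℤ)).sign : K) * (2 * (l : K) - 3 * ((min i j : ℕ) : K) + 1)
                * (if min i j ≤ l ∧ l ≤ max i j - 1 then (1 : K) else 0))
              • Jc b ((i:ℤ)+(j:ℤ)-1-(l:ℤ)) (Jc b ((l:ℤ)-1) P)
            + (b * ((i : K) - (j:K)) * ((i : K) + (j:K) - 2) * (if l = i + j - 1 then (1 : K) else 0))
              • Jc b ((l:ℤ)-1) P
        else 0) := by
      intro l
      rw [A1_eq b l P, Jc_smul]
      rcases le_or_gt 1 l with h0 | h0
      · rw [if_pos h0, if_pos h0]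
        module
      · rw [if_neg (by omega), if_neg (by omega), smul_zero]
    rw [Pi.sub_apply]
    rw [finsum_congr hsummand, ← smul_finsum]
    rw [finsum_eq_sum_of_support_subset _ (show _ ⊆ (Finset.range M : Set ℕ) from by
      intro l hl
      simp only [Function.mem_support] at hl
      simp only [Finset.coe_range, Set.mem_Iio]
      by_contra hc
      push_neg at hc
      apply hl
      rw [Jc_eq_zero_of_vb b (by omega : (N:ℤ) ≤ (l:ℤ)-1) hN h, Jc_map_zero]
      simp)]
    rw [commA1A3 b hb i j hi hj P hN h (M := M) (by omega), commA1A3 b hb j i hj hi P hN h (M := M) (by omega)]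
    rw [← smul_sub]
    congr 1
    rw [tau_reindex b i j hi P hN h (M := M) (by omega),
        tau_reindex b j i hj P hN h (M := M) (by omega)]
    simp only [show ∀ n:ℕ, (j:ℤ)+(i:ℤ)-1-(n:ℤ) = (i:ℤ)+(j:ℤ)-1-(n:ℤ) from fun n => by ring,
      show (j:ℤ)+(i:ℤ)-2 = (i:ℤ)+(j:ℤ)-2 from by ring]
    rw [add_sub_add_comm]
    rw [smul_add, smul_add, Finset.smul_sum, Finset.smul_sum, Finset.smul_sum, Finset.smul_sum,
      ← Finset.sum_add_distrib, ← Finset.sum_add_distrib, ← Finset.sum_sub_distrib]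
    have ebt : (b*((i:K)-1)*((i:K)+2*(j:K)-3)) • Jc b ((i:ℤ)+(j:ℤ)-2) P
        - (b*((j:K)-1)*((j:K)+2*(i:K)-3)) • Jc b ((i:ℤ)+(j:ℤ)-2) P
        = ∑ l ∈ Finset.range M,
            (if l = i + j - 1 then (b * ((i:K)-(j:K)) * ((i:K)+(j:K)-2)) • Jc b ((l:ℤ)-1) P else 0) := by
      rw [Finset.sum_ite_eq' (Finset.range M) (i + j - 1)
          (fun l => (b * ((i:K)-(j:K)) * ((i:K)+(j:K)-2)) • Jc b ((l:ℤ)-1) P),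
        if_pos (by simp only [Finset.mem_range]; omega), ← sub_smul,
        (by omega : ((i + j - 1 : ℕ) : ℤ) - 1 = (i:ℤ)+(j:ℤ)-2)]
      congr 1
      ring
    rw [ebt, ← Finset.sum_add_distrib]
    rw [← sub_eq_zero, ← Finset.sum_sub_distrib]
    rw [Finset.sum_congr rfl (fun l (_ : l ∈ Finset.range M) =>
      pointwise b i j l hi hj (Jc b ((i:ℤ)+(j:ℤ)-1-(l:ℤ)) (Jc b ((l:ℤ)-1) P)) (Jc b ((l:ℤ)-1) P))]
    exact inv_sum b i j hi hj P (by omega)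
end

section
/- Fix a central element u and define currents with charge u: J_{-i} = p_i·, J_i = (1+b)i∂/∂p_i for i > 0, and J_0 = u. Define M_i(1) = J_{i−1}/(1+b) for i ≥ 1, and M_i(m+1) = Σ_{n≥1} J_{i−n−1} M_n(m) + b(i−1)M_{i−1}(m) (with M_0(m) = 0 for m ≥ 1). Then for all i, j ≥ 1: [M_i(2), M_j(2)] = (i−j)·M_{i+j−2}(2). -/
open MvPolynomial

variable {K : Type*} [Field K]

/-- The `b`-deformed current with charge `u`, acting on `K[p_1, p_2, ...]`
(with `X n = p_n` for `n ≥ 1`): multiplication by `p_{-i}` for `i < 0`,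
`(1+b)·i·∂/∂p_i` for `i > 0`, and the central scalar `u` for `i = 0`. -/
noncomputable def Jch (b u : K) (i : ℤ) : MvPolynomial ℕ K → MvPolynomial ℕ K :=
  if 0 < i then fun P => ((1 + b) * (i : K)) • pderiv i.toNat P
  else if i < 0 then fun P => X (-i).toNat * P
  else fun P => u • P

/-- The operators `M_i(m)` (denoted `M^{(1,m)}_i` in the paper), defined by
`M_i(1) = J_{i-1}/(1+b)` for `i ≥ 1` and
`M_i(m+1) = Σ_{n≥1} J_{i−n−1} M_n(m) + b(i−1)·M_{i−1}(m)`, with `M_0(m) = 0`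
(sums are pointwise, locally finite). `Mop b u 0` is junk. -/
noncomputable def Mop (b u : K) : ℕ → ℕ → MvPolynomial ℕ K → MvPolynomial ℕ K
  | 0, _ => 0
  | 1, i => if i = 0 then 0 else fun P => (1 + b)⁻¹ • Jch b u ((i : ℤ) - 1) P
  | m + 2, i => if i = 0 then 0 else fun P =>
      (∑ᶠ n : ℕ, if 1 ≤ n then Jch b u ((i : ℤ) - n - 1) (Mop b u (m + 1) n P) else 0)
        + (b * ((i : K) - 1)) • Mop b u (m + 1) (i - 1) P

/-!
For `i ≥ 1` one has `M_i(2) = (1+b)⁻¹ (G_{i-2} + b (i-1) J_{i-2})`, where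
`G_k = Σ_{m ≥ 0} J_{k-m} J_m` is a Sugawara-type quadratic in the currents. The only input
is that the currents satisfy the Heisenberg relations `[J_a, J_c] = (1+b) a δ_{a+c,0}` and that
every polynomial is killed by all sufficiently high modes, which makes every sum finite.
From these, `[J_a, G_k] = (1+b) a ([a ≤ 0] + [k + a ≥ 0]) J_{k+a}`, and for `k, l ≥ -1` the
`G_k` satisfy the Witt relations `[G_k, G_l] = (1+b)(k-l) G_{k+l}` with no central term. The
linear correction `b (k+1) J_k` is compatible with these relations, and rescaling by `(1+b)⁻¹`
gives the theorem.
-/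

open Filter Function

lemma Int.hasFiniteSupport_of_eventually {M : Type*} [Zero M] {f : ℤ → M}
    (hbot : ∀ᶠ m in atBot, f m = 0) (htop : ∀ᶠ m in atTop, f m = 0) : f.HasFiniteSupport :=
  Filter.eventually_cofinite.1 <| Int.cofinite_eq ▸ eventually_sup.2 ⟨hbot, htop⟩

lemma hasFiniteSupport_ite_eq {α M : Type*} [DecidableEq α] [Zero M] (p : α) (f : α → M) :
    HasFiniteSupport fun m => if m = p then f m else 0 :=
  (Set.finite_singleton p).subset fun _ hm => by_contra fun h => hm (if_neg h)

lemma finsum_ite_eq {α M : Type*} [DecidableEq α] [AddCommMonoid M] (p : α) (f : α → M) :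
    ∑ᶠ m, (if m = p then f m else 0) = f p := by
  rw [finsum_eq_single _ p fun _ hm => if_neg hm, if_pos rfl]

lemma Int.hasFiniteSupport_ite_Icc {M : Type*} [Zero M] (A B : ℤ) (f : ℤ → M) :
    HasFiniteSupport fun n => if A ≤ n ∧ n ≤ B then f n else 0 :=
  (Set.finite_Icc A B).subset fun _ hn => by_contra fun h => hn (if_neg h)

section Sugawara

variable {R V : Type*} [CommRing R] [AddCommGroup V] [Module R V]

structure IsSmoothHeisenbergRep (J : ℤ → Module.End R V) (κ : R) : Prop where
  comm : ∀ a c v, J a (J c v) = J c (J a v) + (if a + c = 0 then a else 0) • κ • v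
  eventually_eq_zero : ∀ v, ∀ᶠ m in atTop, J m v = 0

variable (J : ℤ → Module.End R V)

noncomputable def sugawara (k : ℤ) (v : V) : V :=
  ∑ᶠ m : ℤ, if 0 ≤ m then J (k - m) (J m v) else 0

noncomputable def deformedSugawara (β : R) (k : ℤ) (v : V) : V :=
  sugawara J k v + (β * (k + 1)) • J k v

namespace IsSmoothHeisenbergRep

variable {J} {κ : R}

lemma hasFiniteSupport_modes (hJ : IsSmoothHeisenbergRep J κ) (v : V) {f : ℤ → V → V}
    (hf : ∀ m, f m 0 = 0) (hbot : ∀ᶠ m in atBot, ∀ w, f m w = 0) :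
    HasFiniteSupport fun m => f m (J m v) :=
  Int.hasFiniteSupport_of_eventually (hbot.mono fun m hm => hm _)
    ((hJ.eventually_eq_zero v).mono fun m hm => by simp only [hm, hf])

lemma hasFiniteSupport_sugawara (hJ : IsSmoothHeisenbergRep J κ) (k : ℤ) (v : V) :
    HasFiniteSupport fun m : ℤ => if 0 ≤ m then J (k - m) (J m v) else 0 :=
  hJ.hasFiniteSupport_modes (f := fun m w => if 0 ≤ m then J (k - m) w else 0) v
    (fun m => by simp) ((eventually_lt_atBot 0).mono fun m hm w => if_neg hm.not_ge)

lemma hasFiniteSupport_smul_modes (hJ : IsSmoothHeisenbergRep J κ) (r : R) (s : ℤ) (v : V)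
    {c : ℤ → ℤ} (hc : ∀ᶠ n in atBot, c n = 0) :
    HasFiniteSupport fun n => c n • r • J (s - n) (J n v) :=
  hJ.hasFiniteSupport_modes (f := fun n w => c n • r • J (s - n) w) v (fun m => by simp)
    (hc.mono fun m hm w => by simp [hm])

lemma isLinearMap_sugawara (hJ : IsSmoothHeisenbergRep J κ) (k : ℤ) :
    IsLinearMap R (sugawara J k) where
  map_add v w := by
    rw [sugawara, sugawara, sugawara, ← finsum_add_distrib (hJ.hasFiniteSupport_sugawara k v)
      (hJ.hasFiniteSupport_sugawara k w)]
    exact finsum_congr fun m => by split_ifs <;> simp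
  map_smul r v := by
    rw [sugawara, sugawara, smul_finsum' r (hJ.hasFiniteSupport_sugawara k v)]
    exact finsum_congr fun m => by split_ifs <;> simp

lemma sugawara_finsum (hJ : IsSmoothHeisenbergRep J κ) (k : ℤ) {f : ℤ → V}
    (hf : f.HasFiniteSupport) : sugawara J k (∑ᶠ m, f m) = ∑ᶠ m, sugawara J k (f m) :=
  map_finsum (IsLinearMap.mk' _ (hJ.isLinearMap_sugawara k)) hf

lemma apply_apply_apply (hJ : IsSmoothHeisenbergRep J κ) (a k m : ℤ) (v : V) :
    J a (J (k - m) (J m v)) = J (k - m) (J m (J a v))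
      + ((if m = -a then a • κ • J (k + a) v else 0)
        + (if m = k + a then a • κ • J (k + a) v else 0)) := by
  rw [hJ.comm a (k - m), hJ.comm a m, map_add, map_zsmul, map_smul, add_assoc]
  congr 2
  · by_cases h : m = -a
    · subst h; simp
    · simp [show a + m ≠ 0 by omega, h]
  · by_cases h : m = k + a
    · subst h; simp
    · simp [show a + (k - m) ≠ 0 by omega, h]

lemma apply_sugawara (hJ : IsSmoothHeisenbergRep J κ) (a k : ℤ) (v : V) :
    J a (sugawara J k v) = sugawara J k (J a v)
      + ((if a ≤ 0 then a else 0) + (if 0 ≤ k + a then a else 0)) • κ • J (k + a) v := by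
  have hsplit : ∀ m : ℤ, J a (if 0 ≤ m then J (k - m) (J m v) else 0)
      = (if 0 ≤ m then J (k - m) (J m (J a v)) else 0)
        + ((if m = -a then (if 0 ≤ m then a else 0) • κ • J (k + a) v else 0)
          + (if m = k + a then (if 0 ≤ m then a else 0) • κ • J (k + a) v else 0)) := by
    intro m
    by_cases h : 0 ≤ m
    · simp only [h, if_true, hJ.apply_apply_apply]
    · simp [h]
  rw [sugawara, map_finsum (J a) (hJ.hasFiniteSupport_sugawara k v), finsum_congr hsplit,
    finsum_add_distrib (hJ.hasFiniteSupport_sugawara k (J a v))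
      ((hasFiniteSupport_ite_eq _ _).fun_add (hasFiniteSupport_ite_eq _ _)),
    finsum_add_distrib (hasFiniteSupport_ite_eq _ _) (hasFiniteSupport_ite_eq _ _),
    finsum_ite_eq, finsum_ite_eq, ← add_smul, sugawara]
  simp only [neg_nonneg]

/-- The reflection `n ↦ k + l - n` exchanges the two sums up to a central term, which vanishes
because `k ≤ 1` whenever `k + l = 0`. -/
lemma boundary_sums_cancel (hJ : IsSmoothHeisenbergRep J κ) {k l : ℤ} (hl : -1 ≤ l) (v : V) :
    ∑ᶠ n, (if 0 ≤ n ∧ n ≤ k then (k - n) • κ • J (k + l - n) (J n v) else 0)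
      + ∑ᶠ n, (if l ≤ n ∧ n ≤ k + l then (l - n) • κ • J (k + l - n) (J n v) else 0)
      = 0 := by
  rw [← finsum_comp_equiv (Equiv.subLeft (k + l)) (f := fun n =>
      if l ≤ n ∧ n ≤ k + l then (l - n) • κ • J (k + l - n) (J n v) else 0),
    ← finsum_add_distrib (Int.hasFiniteSupport_ite_Icc _ _ _) ?_]
  · refine finsum_eq_zero_of_forall_eq_zero fun n => ?_
    simp only [Equiv.subLeft_apply, sub_sub_cancel]
    by_cases h : 0 ≤ n ∧ n ≤ k
    · rw [if_pos h, if_pos (by omega), hJ.comm n, show l - (k + l - n) = -(k - n) by ring]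
      have hcentral :
          (k - n) • κ • (if n + (k + l - n) = 0 then n else 0) • κ • v = 0 := by
        rw [smul_comm κ, smul_smul]
        split_ifs with hs
        · obtain rfl | rfl : n = 0 ∨ n = k := by omega
          all_goals simp
        · simp
      rw [smul_add, smul_add, neg_smul, neg_smul, hcentral, neg_zero, add_zero, add_neg_cancel]
    · rw [if_neg h, if_neg (by omega), add_zero]
  · refine (Set.finite_Icc 0 k).subset fun n hn => by_contra fun h => hn (if_neg ?_)
    rw [Set.mem_Icc] at h
    simp only [Equiv.subLeft_apply]
    omega

lemma sugawara_apply_apply (hJ : IsSmoothHeisenbergRep J κ) {k : ℤ} (hk : -1 ≤ k) (l : ℤ)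
    {m : ℤ} (hm : 0 ≤ m) (v : V) :
    sugawara J k (J (l - m) (J m v)) = J (l - m) (J m (sugawara J k v))
      - (m • κ • J (l - m) (J (k + m) v) + ((if l - m ≤ 0 then l - m else 0)
        + (if 0 ≤ k + (l - m) then l - m else 0)) • κ • J (k + l - m) (J m v)) := by
  have hcoef : (if m ≤ 0 then m else 0) + (if 0 ≤ k + m then m else 0) = m := by
    split_ifs <;> omega
  rw [hJ.apply_sugawara m k v, hcoef, map_add, hJ.apply_sugawara (l - m) k (J m v), map_zsmul,
    map_smul, show k + (l - m) = k + l - m by ring]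
  abel

lemma sugawara_sugawara (hJ : IsSmoothHeisenbergRep J κ) {k : ℤ} (hk : -1 ≤ k) (l : ℤ)
    (v : V) :
    sugawara J k (sugawara J l v) = sugawara J l (sugawara J k v)
      - ∑ᶠ n, ((if k ≤ n then n - k else 0)
        + (if 0 ≤ n then (if l - n ≤ 0 then l - n else 0)
          + (if 0 ≤ k + (l - n) then l - n else 0) else 0)) • κ • J (k + l - n) (J n v) := by
  set g : ℤ → V := fun n =>
    (if k ≤ n then n - k else 0) • κ • J (k + l - n) (J n v) with hg
  set C : ℤ → V := fun n => (if 0 ≤ n then (if l - n ≤ 0 then l - n else 0)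
    + (if 0 ≤ k + (l - n) then l - n else 0) else 0) • κ • J (k + l - n) (J n v) with hC
  have hstep : ∀ m, sugawara J k (if 0 ≤ m then J (l - m) (J m v) else 0)
      = (if 0 ≤ m then J (l - m) (J m (sugawara J k v)) else 0) - (g (m + k) + C m) := by
    intro m
    by_cases hm : 0 ≤ m
    · rw [if_pos hm, if_pos hm, hJ.sugawara_apply_apply hk l hm, hg, hC]
      dsimp only
      rw [if_pos (show k ≤ m + k by omega), if_pos hm, add_sub_cancel_right, add_comm m k,
        show k + l - (k + m) = l - m by ring]
    · rw [if_neg hm, if_neg hm, (hJ.isLinearMap_sugawara k).map_zero, hg, hC]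
      dsimp only
      rw [if_neg (by omega), if_neg hm, zero_smul, zero_smul, add_zero, sub_zero]
  have hgfin : HasFiniteSupport g := hJ.hasFiniteSupport_smul_modes κ (k + l) v <|
    (eventually_lt_atBot k).mono fun n hn => if_neg (by omega)
  have hCfin : HasFiniteSupport C := hJ.hasFiniteSupport_smul_modes κ (k + l) v <|
    (eventually_lt_atBot 0).mono fun n hn => if_neg (by omega)
  have hgshift : HasFiniteSupport fun m => g (m + k) :=
    hgfin.preimage (add_left_injective k).injOn
  have hshift : ∑ᶠ m, g (m + k) = ∑ᶠ n, g n := finsum_comp_equiv (Equiv.addRight k)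
  have hdef : sugawara J l v = ∑ᶠ m : ℤ, if 0 ≤ m then J (l - m) (J m v) else 0 := rfl
  rw [hdef, hJ.sugawara_finsum k (hJ.hasFiniteSupport_sugawara l v), finsum_congr hstep,
    finsum_sub_distrib (hJ.hasFiniteSupport_sugawara l _) (hgshift.fun_add hCfin),
    finsum_add_distrib hgshift hCfin, hshift,
    ← finsum_add_distrib hgfin hCfin]
  simp only [hg, hC, ← add_smul]
  rfl

lemma sugawara_comm (hJ : IsSmoothHeisenbergRep J κ) {k l : ℤ} (hk : -1 ≤ k) (hl : -1 ≤ l)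
    (v : V) :
    sugawara J k (sugawara J l v) - sugawara J l (sugawara J k v)
      = (k - l) • κ • sugawara J (k + l) v := by
  set X : ℤ → V := fun n => J (k + l - n) (J n v)
  have hsplit : ∀ n, ((if k ≤ n then n - k else 0)
        + (if 0 ≤ n then (if l - n ≤ 0 then l - n else 0)
          + (if 0 ≤ k + (l - n) then l - n else 0) else 0)) • κ • X n
      = ((l - k) • κ) • (if 0 ≤ n then X n else 0)
        + ((if 0 ≤ n ∧ n ≤ k then (k - n) • κ • X n else 0)
          + (if l ≤ n ∧ n ≤ k + l then (l - n) • κ • X n else 0)) := by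
    intro n
    -- away from the ranges `[0, k]` and `[l, k + l]` the coefficient is the constant `l - k`
    have hcoef : (if k ≤ n then n - k else 0)
          + (if 0 ≤ n then (if l - n ≤ 0 then l - n else 0)
            + (if 0 ≤ k + (l - n) then l - n else 0) else 0)
        = (if 0 ≤ n then l - k else 0) + ((if 0 ≤ n ∧ n ≤ k then k - n else 0)
          + (if l ≤ n ∧ n ≤ k + l then l - n else 0)) := by
      split_ifs <;> omega
    rw [hcoef, add_smul, add_smul, ite_smul, ite_smul, ite_smul, zero_smul, smul_ite, smul_zero,
      smul_assoc]
  rw [hJ.sugawara_sugawara hk l v, sub_sub_cancel_left, finsum_congr hsplit,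
    finsum_add_distrib ((hJ.hasFiniteSupport_sugawara (k + l) v).fun_comp (smul_zero _))
      ((Int.hasFiniteSupport_ite_Icc _ _ _).fun_add (Int.hasFiniteSupport_ite_Icc _ _ _)),
    finsum_add_distrib (Int.hasFiniteSupport_ite_Icc _ _ _) (Int.hasFiniteSupport_ite_Icc _ _ _),
    hJ.boundary_sums_cancel hl v, add_zero, ← smul_finsum' _ (hJ.hasFiniteSupport_sugawara _ v),
    smul_assoc, ← neg_smul, neg_sub]
  rfl

lemma deformedSugawara_smul (hJ : IsSmoothHeisenbergRep J κ) (β : R) (k : ℤ) (c : R) (v : V) :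
    deformedSugawara J β k (c • v) = c • deformedSugawara J β k v := by
  rw [deformedSugawara, deformedSugawara, (hJ.isLinearMap_sugawara k).map_smul, map_smul,
    smul_add, smul_comm]

lemma deformedSugawara_comm (hJ : IsSmoothHeisenbergRep J κ) (β : R) {k l : ℤ} (hk : -1 ≤ k)
    (hl : -1 ≤ l) (v : V) :
    deformedSugawara J β k (deformedSugawara J β l v)
        - deformedSugawara J β l (deformedSugawara J β k v)
      = (k - l) • κ • deformedSugawara J β (k + l) v := by
  have hGk := hJ.isLinearMap_sugawara k
  have hGl := hJ.isLinearMap_sugawara l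
  have hweight : ∀ a c : ℤ, -1 ≤ a → -1 ≤ c →
      ((a : R) + 1) * ((if a ≤ 0 then (a : R) else 0) + (if 0 ≤ a + c then (a : R) else 0))
        = (a + 1) * a := by
    intro a c ha hc
    obtain rfl | rfl | ha : a = -1 ∨ a = 0 ∨ 1 ≤ a := by omega
    · simp
    · simp
    · rw [if_neg (by omega), if_pos (by omega), zero_add]
  have hwk := hweight k l hk hl
  have hwl := hweight l k hl hk
  rw [add_comm l k] at hwl
  have hcentral : ((k : R) + 1) * ((l : R) + 1) * (if k + l = 0 then (k : R) else 0) = 0 := by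
    split_ifs with h
    · obtain rfl | rfl | rfl : k = -1 ∨ k = 0 ∨ k = 1 := by omega
      · simp
      · simp
      · obtain rfl : l = -1 := by omega
        simp
    · simp
  simp only [deformedSugawara, hGk.map_add, hGl.map_add, hGk.map_smul, hGl.map_smul, map_add,
    map_smul, hJ.apply_sugawara k l, hJ.apply_sugawara l k, hJ.comm k l,
    eq_add_of_sub_eq (hJ.sugawara_comm hk hl v), add_comm l k]
  linear_combination (norm := module) (β * κ * (hwk - hwl)) • J (k + l) v
    + (β ^ 2 * κ * hcentral) • v

end IsSmoothHeisenbergRep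

end Sugawara

lemma MvPolynomial.pderiv_pderiv_comm {R σ : Type*} [CommSemiring R] (i j : σ)
    (p : MvPolynomial σ R) : pderiv i (pderiv j p) = pderiv j (pderiv i p) := by
  classical
  induction p using MvPolynomial.induction_on' with
  | monomial s a =>
    simp only [pderiv_monomial]
    rcases eq_or_ne i j with rfl | hij
    · rfl
    · rw [Finsupp.tsub_apply, Finsupp.tsub_apply, Finsupp.single_apply, Finsupp.single_apply,
        if_neg hij, if_neg (Ne.symm hij), Nat.sub_zero, Nat.sub_zero, tsub_right_comm]
      congr 1
      ring
  | add p q hp hq => simp only [map_add, hp, hq]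

noncomputable def current (b u : K) (a : ℤ) : Module.End K (MvPolynomial ℕ K) :=
  if 0 < a then ((1 + b) * a) • (pderiv a.toNat).toLinearMap
  else if a < 0 then LinearMap.mulLeft K (X (-a).toNat)
  else u • LinearMap.id

section Current

variable (b u : K)

lemma current_apply (a : ℤ) (P : MvPolynomial ℕ K) : current b u a P = Jch b u a P := by
  unfold current Jch
  split_ifs <;> rfl

lemma current_of_pos {a : ℤ} (ha : 0 < a) (P : MvPolynomial ℕ K) :
    current b u a P = ((1 + b) * a) • pderiv a.toNat P := by
  rw [current, if_pos ha]
  rfl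

lemma current_of_neg {a : ℤ} (ha : a < 0) (P : MvPolynomial ℕ K) :
    current b u a P = X (-a).toNat * P := by
  rw [current, if_neg ha.not_gt, if_pos ha]
  rfl

lemma current_zero (P : MvPolynomial ℕ K) : current b u 0 P = u • P := by
  rw [current, if_neg (lt_irrefl 0), if_neg (lt_irrefl 0)]
  rfl

lemma current_comm_of_pos_of_neg {a c : ℤ} (ha : 0 < a) (hc : c < 0) (P : MvPolynomial ℕ K) :
    current b u a (current b u c P)
      = current b u c (current b u a P) + (if a + c = 0 then a else 0) • (1 + b) • P := by
  rw [current_of_neg b u hc, current_of_pos b u ha, current_of_pos b u ha, current_of_neg b u hc,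
    pderiv_mul, smul_add, mul_smul_comm, add_comm]
  split_ifs with h
  · rw [show (-c).toNat = a.toNat by omega, pderiv_X_self, one_mul, ← smul_assoc, zsmul_eq_mul,
      mul_comm]
  · rw [pderiv_X_of_ne (by omega), zero_mul, smul_zero, zero_smul, add_zero]

lemma current_comm (a c : ℤ) (P : MvPolynomial ℕ K) :
    current b u a (current b u c P)
      = current b u c (current b u a P) + (if a + c = 0 then a else 0) • (1 + b) • P := by
  wlog hca : c ≤ a generalizing a c
  · rw [this c a (by omega), add_assoc, ← add_smul,
      show (if c + a = 0 then c else 0) + (if a + c = 0 then a else 0) = 0 by split_ifs <;> omega,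
      zero_smul, add_zero]
  rcases eq_or_ne a 0 with rfl | ha0
  · simp [current_zero]
  rcases eq_or_ne c 0 with rfl | hc0
  · simp [current_zero, ha0]
  rcases lt_or_gt_of_ne hc0 with hc | hc
  · rcases lt_or_gt_of_ne ha0 with ha | ha
    · rw [current_of_neg b u ha, current_of_neg b u hc, current_of_neg b u hc,
        current_of_neg b u ha, mul_left_comm, if_neg (by omega), zero_smul, add_zero]
    · exact current_comm_of_pos_of_neg b u ha hc P
  · have ha := hc.trans_le hca
    rw [current_of_pos b u hc, current_of_pos b u ha, Derivation.map_smul, current_of_pos b u hc,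
      current_of_pos b u ha, Derivation.map_smul, pderiv_pderiv_comm, smul_comm,
      if_neg (by omega), zero_smul, add_zero]

end Current

lemma isSmoothHeisenbergRep_current (b u : K) : IsSmoothHeisenbergRep (current b u) (1 + b) where
  comm := current_comm b u
  eventually_eq_zero P := eventually_atTop.2 ⟨(P.vars.sup id : ℕ) + 1, fun m hm => by
    rw [current_of_pos b u (by omega), pderiv_eq_zero_of_notMem_vars, smul_zero]
    intro hmem
    have := Finset.le_sup (f := id) hmem
    simp only [id] at this
    omega⟩

lemma finsum_comp_of_support_subset_range {α β M : Type*} [AddCommMonoid M] {g : α → β}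
    (hg : Injective g) {f : β → M} (hf : support f ⊆ Set.range g) :
    ∑ᶠ a, f (g a) = ∑ᶠ b, f b := by
  rw [← finsum_mem_range hg, finsum_mem_def, Set.indicator_eq_self.2 hf]

lemma Mop_one (b u : K) {n : ℕ} (hn : n ≠ 0) (P : MvPolynomial ℕ K) :
    Mop b u 1 n P = (1 + b)⁻¹ • current b u (n - 1) P := by
  rw [Mop, if_neg hn, current_apply]

lemma Mop_two (b u : K) {i : ℕ} (hi : 1 ≤ i) (P : MvPolynomial ℕ K) :
    Mop b u 2 i P = (1 + b)⁻¹ • deformedSugawara (current b u) b ((i : ℤ) - 2) P := by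
  have hJ := isSmoothHeisenbergRep_current b u
  have hsum : (∑ᶠ n : ℕ, if 1 ≤ n then Jch b u ((i : ℤ) - n - 1) (Mop b u 1 n P) else 0)
      = (1 + b)⁻¹ • sugawara (current b u) ((i : ℤ) - 2) P := by
    set F : ℤ → MvPolynomial ℕ K := fun m => (1 + b)⁻¹ •
      if 0 ≤ m then current b u ((i : ℤ) - 2 - m) (current b u m P) else 0 with hF
    have hterm : ∀ n : ℕ, (if 1 ≤ n then Jch b u ((i : ℤ) - n - 1) (Mop b u 1 n P) else 0)
        = F ((n : ℤ) - 1) := by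
      intro n
      rcases Nat.eq_zero_or_pos n with rfl | hn
      · simp [hF]
      · rw [if_pos (show 1 ≤ n from hn), Mop_one b u hn.ne', ← current_apply, map_smul, hF]
        dsimp only
        rw [if_pos (by omega), show (i : ℤ) - 2 - (n - 1) = i - n - 1 by ring]
    have hsupp : support F ⊆ Set.range fun n : ℕ => (n : ℤ) - 1 := fun m hm =>
      ⟨(m + 1).toNat, by_contra fun h => hm <| by
        simp only at h
        rw [hF]
        dsimp only
        rw [if_neg (by omega), smul_zero]⟩
    rw [finsum_congr hterm, finsum_comp_of_support_subset_range (fun n n' h => by simpa using h)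
      hsupp, sugawara, smul_finsum' _ (hJ.hasFiniteSupport_sugawara _ P)]
  have hlin : (b * ((i : K) - 1)) • Mop b u 1 (i - 1) P
      = (1 + b)⁻¹ • (b * (((i : ℤ) - 2 : ℤ) + 1)) • current b u ((i : ℤ) - 2) P := by
    rcases eq_or_lt_of_le hi with rfl | hi2
    · simp
    · rw [Mop_one b u (by omega), smul_comm, show (((i : ℤ) - 2 : ℤ) : K) + 1
        = (i : K) - 1 by push_cast; ring, show ((i - 1 : ℕ) : ℤ) - 1 = i - 2 by omega]
  rw [Mop, if_neg (by omega), hsum, hlin, deformedSugawara, smul_add]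

/-- `[M_i(2), M_j(2)] = (i−j)·M_{i+j−2}(2)`. -/
theorem commutator_M2_M2 (b u : K) (i j : ℕ) (hi : 1 ≤ i) (hj : 1 ≤ j) :
    commOp (Mop b u 2 i) (Mop b u 2 j) = ((i : K) - (j : K)) • Mop b u 2 (i + j - 2) := by
  funext P
  rcases eq_or_ne i j with rfl | hij
  · simp [commOp]
  have hJ := isSmoothHeisenbergRep_current b u
  -- valid also when `1 + b = 0`, where both sides are `0`
  have hinv : (1 + b)⁻¹ * (1 + b)⁻¹ * (1 + b) = (1 + b)⁻¹ := by
    simpa using mul_self_mul_inv (1 + b)⁻¹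
  have hidx : ((i + j - 2 : ℕ) : ℤ) - 2 = ((i : ℤ) - 2) + ((j : ℤ) - 2) := by omega
  rw [Pi.smul_apply, Mop_two b u (show 1 ≤ i + j - 2 by omega), hidx]
  simp only [commOp, Mop_two b u hi, Mop_two b u hj, hJ.deformedSugawara_smul]
  rw [← smul_sub, ← smul_sub, hJ.deformedSugawara_comm b (by omega) (by omega)]
  linear_combination (norm := module)
    (((i : K) - j) * hinv) • deformedSugawara (current b u) b ((i : ℤ) - 2 + ((j : ℤ) - 2)) P
end
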